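/- Let Λ be a locally convex k-graph and λ ∈ Λ^{≤ m+n}. Then μ := λ(0, m ∧ d(λ)) and ν := λ(m ∧ d(λ), d(λ)) are the unique paths with μ ∈ Λ^{≤m}, ν ∈ Λ^{≤n}, and λ = μν. -/

import Mathlib

/-- A `k`-graph: a countable category `Λ` with a degree functor `d : Λ → ℕ^k`
satisfying the factorisation property. Morphisms form the type `Mor`,
objects (vertices) the type `Obj`. -/
structure KGraph (k : ℕ) where
  Obj : Type
  Mor : Type
  countableObj : Countable Obj
  countableMor : Countable Mor
  r : Mor → Obj
  s : Mor → Obj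
  d : Mor → (Fin k → ℕ)
  id : Obj → Mor
  comp : ∀ μ ν : Mor, s μ = r ν → Mor
  r_id : ∀ v, r (id v) = v
  s_id : ∀ v, s (id v) = v
  d_id : ∀ v, d (id v) = 0
  r_comp : ∀ μ ν h, r (comp μ ν h) = r μ
  s_comp : ∀ μ ν h, s (comp μ ν h) = s ν
  d_comp : ∀ μ ν h, d (comp μ ν h) = d μ + d ν
  id_comp : ∀ μ : Mor, comp (id (r μ)) μ (s_id (r μ)) = μ
  comp_id : ∀ μ : Mor, comp μ (id (s μ)) ((r_id (s μ)).symm) = μ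
  assoc : ∀ (μ ν ρ : Mor) (h₁ : s μ = r ν) (h₂ : s ν = r ρ),
    comp (comp μ ν h₁) ρ ((s_comp μ ν h₁).trans h₂)
      = comp μ (comp ν ρ h₂) (h₁.trans (r_comp ν ρ h₂).symm)
  factor : ∀ (lam : Mor) (m n : Fin k → ℕ), d lam = m + n →
    ∃! p : {q : Mor × Mor // s q.1 = r q.2},
      d p.val.1 = m ∧ d p.val.2 = n ∧ lam = comp p.val.1 p.val.2 p.property

namespace KGraph

variable {k : ℕ} (Λ : KGraph k)

/-- `μ` is an initial segment of `lam`, i.e. `lam = μρ` for some `ρ`. -/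
def InitSeg (μ lam : Λ.Mor) : Prop :=
  ∃ (ρ : Λ.Mor) (h : Λ.s μ = Λ.r ρ), lam = Λ.comp μ ρ h

/-- The set of minimal common extensions of `μ` and `ν`. -/
def MCE (μ ν : Λ.Mor) : Set Λ.Mor :=
  {lam | Λ.d lam = Λ.d μ ⊔ Λ.d ν ∧ Λ.InitSeg μ lam ∧ Λ.InitSeg ν lam}

/-- `Λ` is finitely aligned if all `MCE` sets are finite. -/
def FinitelyAligned : Prop := ∀ μ ν : Λ.Mor, (Λ.MCE μ ν).Finite

/-- Aperiodicity: distinct paths with the same source admit a common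
extension `τ` with `MCE (ατ, βτ) = ∅`. -/
def Aperiodic : Prop :=
  ∀ α β : Λ.Mor, α ≠ β → Λ.s α = Λ.s β →
    ∃ (τ : Λ.Mor) (hα : Λ.s α = Λ.r τ) (hβ : Λ.s β = Λ.r τ),
      Λ.MCE (Λ.comp α τ hα) (Λ.comp β τ hβ) = ∅

/-- `E` is a finite exhaustive subset of `vΛ`. -/
def IsFE (v : Λ.Obj) (E : Set Λ.Mor) : Prop :=
  E.Finite ∧ (∀ α ∈ E, Λ.r α = v) ∧
    ∀ μ : Λ.Mor, Λ.r μ = v → ∃ lam ∈ E, (Λ.MCE μ lam).Nonempty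

/-- The segment `lam(p,q)` of a path `lam`, for `p ≤ q ≤ d lam`,
obtained from the factorisation property. -/
noncomputable def seg (lam : Λ.Mor) (p q : Fin k → ℕ) (hpq : p ≤ q) (hq : q ≤ Λ.d lam) :
    Λ.Mor := by
  have h1 : Λ.d lam = p + (Λ.d lam - p) := by
    funext i; exact (Nat.add_sub_cancel' ((hpq.trans hq) i)).symm
  have hspec := (Λ.factor lam p (Λ.d lam - p) h1).exists.choose_spec
  refine (Λ.factor ((Λ.factor lam p (Λ.d lam - p) h1).exists.choose).val.2
      (q - p) (Λ.d lam - q) ?_).exists.choose.val.1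
  rw [hspec.2.1]
  funext i
  have h3 : p i ≤ q i := hpq i
  have h4 : q i ≤ Λ.d lam i := hq i
  simp only [Pi.sub_apply, Pi.add_apply]
  omega

/-- A (possibly infinite) path in `Λ`: a degree-preserving functor from
`Ω_{k,m}` (for `m = deg ∈ (ℕ ∪ {∞})^k`) to `Λ`, recorded by its segments. -/
structure InfPath (Λ : KGraph k) where
  deg : Fin k → ℕ∞
  seg : ∀ p q : Fin k → ℕ, p ≤ q → (∀ i, (q i : ℕ∞) ≤ deg i) → Λ.Mor
  d_seg : ∀ p q hpq hq, Λ.d (seg p q hpq hq) = q - p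
  comp_seg : ∀ (p q r : Fin k → ℕ) (hpq : p ≤ q) (hqr : q ≤ r)
      (hq : ∀ i, (q i : ℕ∞) ≤ deg i) (hr : ∀ i, (r i : ℕ∞) ≤ deg i),
    ∃ h : Λ.s (seg p q hpq hq) = Λ.r (seg q r hqr hr),
      Λ.comp (seg p q hpq hq) (seg q r hqr hr) h = seg p r (hpq.trans hqr) hr

/-- The vertex `x(n)` of an infinite path. -/
def InfPath.vert {Λ : KGraph k} (x : Λ.InfPath) (n : Fin k → ℕ) (hn : ∀ i, (n i : ℕ∞) ≤ x.deg i) : Λ.Obj :=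
  Λ.r (x.seg n n le_rfl hn)

/-- The range `r(x) = x(0)` of an infinite path. -/
def InfPath.rng {Λ : KGraph k} (x : Λ.InfPath) : Λ.Obj :=
  Λ.r (x.seg 0 0 le_rfl (fun i => by simp))

/-- `x` is a boundary path: it hits every finite exhaustive set. -/
def IsBoundary (x : Λ.InfPath) : Prop :=
  ∀ (n : Fin k → ℕ) (hn : ∀ i, (n i : ℕ∞) ≤ x.deg i) (E : Set Λ.Mor),
    Λ.IsFE (x.vert n hn) E →
    ∃ (p : Fin k → ℕ) (hp : ∀ i, ((n + p) i : ℕ∞) ≤ x.deg i),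
      x.seg n (n + p) le_self_add hp ∈ E

/-- The set of boundary paths with range `v` is `v∂Λ`. -/

private lemma enat_aux {a b : ℕ} {D : ℕ∞} (h2 : (a : ℕ∞) ≤ D) (h1 : (b : ℕ∞) ≤ D - a) :
    ((a + b : ℕ) : ℕ∞) ≤ D := by
  cases D with
  | top => exact le_top
  | coe dN =>
    have ha : a ≤ dN := by exact_mod_cast h2
    rw [← ENat.coe_sub] at h1
    have hb : b ≤ dN - a := by exact_mod_cast h1
    exact_mod_cast (by omega : a + b ≤ dN)

/-- The shifted path `σ^m(x)`. -/
def InfPath.shift {Λ : KGraph k} (x : Λ.InfPath) (m : Fin k → ℕ) (hm : ∀ i, (m i : ℕ∞) ≤ x.deg i) :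
    Λ.InfPath where
  deg := fun i => x.deg i - (m i : ℕ∞)
  seg := fun p q hpq hq => x.seg (m + p) (m + q) (add_le_add_right hpq m)
    (fun i => by
      have := enat_aux (hm i) (hq i)
      simpa using this)
  d_seg := fun p q hpq hq => by
    rw [x.d_seg]
    funext i
    simp only [Pi.sub_apply, Pi.add_apply]
    omega
  comp_seg := fun p q r hpq hqr hq hr =>
    x.comp_seg (m + p) (m + q) (m + r) (add_le_add_right hpq m) (add_le_add_right hqr m) _ _

/-- `w = lam · z` : the path `w` extends `z` by the finite path `lam`,
i.e. `w(0, d lam) = lam` and `σ^{d lam}(w) = z`. -/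
def InfPath.ExtendsBy {Λ : KGraph k} (w z : Λ.InfPath) (lam : Λ.Mor) : Prop :=
  ∃ h : ∀ i, ((Λ.d lam) i : ℕ∞) ≤ w.deg i,
    w.seg 0 (Λ.d lam) (zero_le) h = lam ∧ w.shift (Λ.d lam) h = z

/-- Local periodicity `m, n` at `v`. -/
def LocalPeriodicity (m n : Fin k → ℕ) (v : Λ.Obj) : Prop :=
  ∀ x : Λ.InfPath, Λ.IsBoundary x → x.rng = v →
    (∀ i, (((m ⊔ n) i : ℕ) : ℕ∞) ≤ x.deg i) ∧
    ∃ (hm : ∀ i, (m i : ℕ∞) ≤ x.deg i) (hn : ∀ i, (n i : ℕ∞) ≤ x.deg i),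
      x.shift m hm = x.shift n hn

/-- Cofinality of `Λ`, stated in terms of finite paths. -/
def Cofinal : Prop :=
  ∀ v w : Λ.Obj, ∃ E : Set Λ.Mor, Λ.IsFE w E ∧
    ∀ α ∈ E, ∃ lam : Λ.Mor, Λ.r lam = v ∧ Λ.s lam = Λ.s α

/-- Membership in `Λ^{≤ n}`. -/
def LeSet (lam : Λ.Mor) (n : Fin k → ℕ) : Prop :=
  Λ.d lam ≤ n ∧ ∀ i : Fin k, Λ.d lam i < n i →
    ¬ ∃ g : Λ.Mor, Λ.d g = Pi.single i 1 ∧ Λ.r g = Λ.s lam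

/-- Local convexity of `Λ`. -/
def LocallyConvex : Prop :=
  ∀ (i j : Fin k), i ≠ j → ∀ e f : Λ.Mor,
    Λ.d e = Pi.single i 1 → Λ.d f = Pi.single j 1 → Λ.r e = Λ.r f →
      (∃ g, Λ.d g = Pi.single j 1 ∧ Λ.r g = Λ.s e) ∧
      (∃ g, Λ.d g = Pi.single i 1 ∧ Λ.r g = Λ.s f)

/-- Row-finiteness of `Λ`. -/
def RowFinite : Prop :=
  ∀ (v : Λ.Obj) (n : Fin k → ℕ), {lam : Λ.Mor | Λ.r lam = v ∧ Λ.d lam = n}.Finite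

/-!
Put `p = m ∧ d(λ)` and factor `λ = μν` with `d(μ) = p`. If `p_i < m_i` then `d(λ)_i < m_i`, so `ν`
has no `e_i`-component; local convexity then transports an `e_i`-edge at `s(μ) = r(ν)` along `ν`,
one edge at a time, to `s(ν) = s(λ)`, where `λ ∈ Λ^{≤ m+n}` forbids one. Hence `μ ∈ Λ^{≤ m}`, and
`ν ∈ Λ^{≤ n}` is degree arithmetic. Conversely, if `λ = μν` with `μ ∈ Λ^{≤ m}`, then wherever
`d(μ)_i < m_i` there is no `e_i`-edge at `r(ν)`, so `d(ν)_i = 0`; thus `d(μ) = p`, and the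
factorisation property identifies `μ, ν` with the two segments.
-/

/-- `vΛ^{e_i} ≠ ∅`. -/
def HasEdge (v : Λ.Obj) (i : Fin k) : Prop :=
  ∃ g : Λ.Mor, Λ.d g = Pi.single i 1 ∧ Λ.r g = v

theorem exists_eq_comp (lam : Λ.Mor) {m n : Fin k → ℕ} (hd : Λ.d lam = m + n) :
    ∃ (μ ν : Λ.Mor) (h : Λ.s μ = Λ.r ν), Λ.d μ = m ∧ Λ.d ν = n ∧ lam = Λ.comp μ ν h :=
  let ⟨⟨⟨μ, ν⟩, h⟩, hspec, _⟩ := Λ.factor lam m n hd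
  ⟨μ, ν, h, hspec⟩

theorem eq_of_comp_eq_comp {μ ν μ' ν' : Λ.Mor} {h : Λ.s μ = Λ.r ν} {h' : Λ.s μ' = Λ.r ν'}
    (hc : Λ.comp μ ν h = Λ.comp μ' ν' h') (hd : Λ.d μ = Λ.d μ') : μ = μ' ∧ ν = ν' := by
  have hdν : Λ.d ν = Λ.d ν' := by
    have := Λ.d_comp μ ν h
    rw [hc, Λ.d_comp, hd] at this
    exact (add_left_cancel this).symm
  have := (Λ.factor _ _ _ (Λ.d_comp μ ν h)).unique (y₁ := ⟨(μ, ν), h⟩) (y₂ := ⟨(μ', ν'), h'⟩)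
    ⟨rfl, rfl, rfl⟩ ⟨hd.symm, hdν.symm, hc⟩
  exact Prod.ext_iff.mp (congrArg Subtype.val this)

theorem s_eq_r_of_d_eq_zero {lam : Λ.Mor} (hd : Λ.d lam = 0) : Λ.s lam = Λ.r lam := by
  have h := (Λ.eq_of_comp_eq_comp ((Λ.comp_id lam).trans (Λ.id_comp lam).symm)
    (hd.trans (Λ.d_id _).symm)).2
  simpa only [Λ.r_id] using congrArg Λ.r h

theorem exists_eq_comp_seg_comp (lam : Λ.Mor) {p q : Fin k → ℕ} (hpq : p ≤ q) (hq : q ≤ Λ.d lam) :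
    ∃ (a c : Λ.Mor) (hab : Λ.s a = Λ.r (Λ.seg lam p q hpq hq))
      (hbc : Λ.s (Λ.seg lam p q hpq hq) = Λ.r c), Λ.d a = p ∧ Λ.d (Λ.seg lam p q hpq hq) = q - p ∧
        lam = Λ.comp a (Λ.comp _ c hbc) (hab.trans (Λ.r_comp _ c hbc).symm) := by
  dsimp only [seg]
  generalize_proofs _ hx hy
  obtain ⟨hda, -, hlam⟩ := hx.choose_spec
  obtain ⟨hdb, -, hsnd⟩ := hy.choose_spec
  have hab : Λ.s hx.choose.val.1 = Λ.r hy.choose.val.1 :=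
    hx.choose.prop.trans ((congrArg Λ.r hsnd).trans (Λ.r_comp _ _ _))
  exact ⟨_, _, hab, hy.choose.prop, hda, hdb, hlam.trans (by congr)⟩

theorem seg_eq_of_eq_comp_comp {lam a b c : Λ.Mor} {hab : Λ.s a = Λ.r b} {hbc : Λ.s b = Λ.r c}
    (hlam : lam = Λ.comp a (Λ.comp b c hbc) (hab.trans (Λ.r_comp b c hbc).symm))
    {p q : Fin k → ℕ} (hpq : p ≤ q) (hq : q ≤ Λ.d lam) (hda : Λ.d a = p) (hdb : Λ.d b = q - p) :
    Λ.seg lam p q hpq hq = b := by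
  obtain ⟨a', c', _, _, hda', hdb', hlam'⟩ := Λ.exists_eq_comp_seg_comp lam hpq hq
  have hbc' := (Λ.eq_of_comp_eq_comp (hlam'.symm.trans hlam) (hda'.trans hda.symm)).2
  exact (Λ.eq_of_comp_eq_comp hbc' (hdb'.trans hdb.symm)).1

theorem seg_eq_of_eq_comp {lam μ ν : Λ.Mor} {h : Λ.s μ = Λ.r ν} (hlam : lam = Λ.comp μ ν h)
    {p : Fin k → ℕ} (hp : Λ.d μ = p) (h0p : 0 ≤ p) (hpd : p ≤ Λ.d lam) :
    Λ.seg lam 0 p h0p hpd = μ ∧ Λ.seg lam p (Λ.d lam) hpd le_rfl = ν := by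
  subst hlam hp
  constructor
  · exact Λ.seg_eq_of_eq_comp_comp (hab := by rw [Λ.s_id, Λ.r_comp]) (Λ.id_comp _).symm _ _
      (Λ.d_id _) (tsub_zero _).symm
  · refine Λ.seg_eq_of_eq_comp_comp (hab := h) (c := Λ.id (Λ.s ν)) (hbc := (Λ.r_id _).symm)
      ?_ _ _ rfl ?_
    · simp only [Λ.comp_id]
    · rw [Λ.d_comp, add_tsub_cancel_left]

theorem d_comp_apply {μ ν : Λ.Mor} (h : Λ.s μ = Λ.r ν) (i : Fin k) :
    Λ.d (Λ.comp μ ν h) i = Λ.d μ i + Λ.d ν i :=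
  congrFun (Λ.d_comp μ ν h) i

theorem exists_eq_edge_comp {ν : Λ.Mor} {j : Fin k} (hj : 0 < Λ.d ν j) :
    ∃ (f ν' : Λ.Mor) (h : Λ.s f = Λ.r ν'), Λ.d f = Pi.single j 1 ∧ ν = Λ.comp f ν' h := by
  have hle : Pi.single j 1 ≤ Λ.d ν := by
    intro t
    rcases eq_or_ne t j with rfl | htj
    · simpa using Nat.succ_le_of_lt hj
    · simp [htj]
  obtain ⟨f, ν', h, hf, -, hν⟩ := Λ.exists_eq_comp ν (add_tsub_cancel_of_le hle).symm
  exact ⟨f, ν', h, hf, hν⟩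

theorem hasEdge_r_of_d_pos {ν : Λ.Mor} {j : Fin k} (hj : 0 < Λ.d ν j) :
    Λ.HasEdge (Λ.r ν) j := by
  obtain ⟨f, ν', h, hf, rfl⟩ := Λ.exists_eq_edge_comp hj
  exact ⟨f, hf, (Λ.r_comp f ν' h).symm⟩

theorem d_eq_inf_of_leSet {lam μ ν : Λ.Mor} {h : Λ.s μ = Λ.r ν} (hc : Λ.comp μ ν h = lam)
    {m : Fin k → ℕ} (hμ : Λ.LeSet μ m) : Λ.d μ = m ⊓ Λ.d lam := by
  subst hc
  funext i
  rw [Pi.inf_apply, Λ.d_comp_apply]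
  have hμi : Λ.d μ i ≤ m i := hμ.1 i
  rcases hμi.lt_or_eq with hlt | heq
  · have hνi : Λ.d ν i = 0 := by
      by_contra hνi
      exact hμ.2 i hlt (h ▸ Λ.hasEdge_r_of_d_pos (Nat.pos_of_ne_zero hνi))
    omega
  · omega

section

variable {Λ}

theorem LocallyConvex.hasEdge_s (hlc : Λ.LocallyConvex) {i : Fin k} {ν : Λ.Mor}
    (hνi : Λ.d ν i = 0) (hr : Λ.HasEdge (Λ.r ν) i) : Λ.HasEdge (Λ.s ν) i := by
  induction hδ : Λ.d ν using WellFoundedLT.induction generalizing ν with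
  | _ δ ih =>
  -- Peel off a first edge `f` of `ν`, of degree `e_j` with `j ≠ i`; local convexity at `r f`
  -- yields an `e_i`-edge at `s f = r ν'`, and `ν'` is shorter than `ν`.
  by_cases h0 : Λ.d ν = 0
  · rwa [Λ.s_eq_r_of_d_eq_zero h0]
  obtain ⟨j, hj⟩ := Function.ne_iff.mp h0
  have hij : i ≠ j := by
    rintro rfl
    exact hj hνi
  obtain ⟨f, ν', hf, hdf, rfl⟩ := Λ.exists_eq_edge_comp (Nat.pos_of_ne_zero hj)
  obtain ⟨g, hdg, hrg⟩ := hr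
  have hdν : Λ.d (Λ.comp f ν' hf) = Pi.single j 1 + Λ.d ν' := by rw [Λ.d_comp, hdf]
  obtain ⟨-, g', hdg', hrg'⟩ := hlc i j hij g f hdg hdf (hrg.trans (Λ.r_comp f ν' hf))
  have hν'i : Λ.d ν' i = 0 := by
    simpa [Λ.d_comp_apply, hdf, Pi.single_apply, hij] using hνi
  rw [Λ.s_comp]
  exact ih (Λ.d ν') (hδ ▸ hdν ▸ lt_add_of_pos_left _ (by simp)) hν'i ⟨g', hdg', hrg'.trans hf⟩ rfl

theorem LocallyConvex.leSet_left (hlc : Λ.LocallyConvex) {lam μ ν : Λ.Mor} {h : Λ.s μ = Λ.r ν}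
    (hc : Λ.comp μ ν h = lam) {m n : Fin k → ℕ} (hlam : Λ.LeSet lam (m + n))
    (hμ : Λ.d μ = m ⊓ Λ.d lam) : Λ.LeSet μ m := by
  subst hc
  refine ⟨hμ ▸ inf_le_left, fun i hi hedge => ?_⟩
  have hμi := congrFun hμ i
  rw [Pi.inf_apply, Λ.d_comp_apply] at hμi
  have hνi : Λ.d ν i = 0 := by omega
  refine hlam.2 i (by rw [Λ.d_comp_apply, Pi.add_apply]; omega) ?_
  rw [Λ.s_comp]
  exact hlc.hasEdge_s hνi (h ▸ hedge)

end

theorem leSet_right {lam μ ν : Λ.Mor} {h : Λ.s μ = Λ.r ν}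
    (hc : Λ.comp μ ν h = lam) {m n : Fin k → ℕ} (hlam : Λ.LeSet lam (m + n))
    (hμ : Λ.d μ = m ⊓ Λ.d lam) : Λ.LeSet ν n := by
  subst hc
  have hdeg (i : Fin k) :
      Λ.d μ i = m i ⊓ (Λ.d μ i + Λ.d ν i) ∧ Λ.d μ i + Λ.d ν i ≤ m i + n i := by
    have hle : Λ.d (Λ.comp μ ν h) i ≤ m i + n i := hlam.1 i
    rw [Λ.d_comp_apply] at hle
    exact ⟨by simpa only [Pi.inf_apply, Λ.d_comp_apply] using congrFun hμ i, hle⟩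
  refine ⟨fun i => show Λ.d ν i ≤ n i by have := hdeg i; omega,
    fun i hi hedge => hlam.2 i ?_ (by rwa [Λ.s_comp])⟩
  rw [Λ.d_comp_apply, Pi.add_apply]
  have := hdeg i
  omega

/-- In a locally convex `k`-graph, each `λ ∈ Λ^{≤ m+n}` factors uniquely
as `λ = μν` with `μ = λ(0, m ∧ d λ) ∈ Λ^{≤ m}` and
`ν = λ(m ∧ d λ, d λ) ∈ Λ^{≤ n}`. -/
theorem locally_convex_unique_factorisation (hlc : Λ.LocallyConvex)
    (m n : Fin k → ℕ) (lam : Λ.Mor) (hlam : Λ.LeSet lam (m + n)) :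
    Λ.LeSet (Λ.seg lam 0 (m ⊓ Λ.d lam) (zero_le) inf_le_right) m ∧
    Λ.LeSet (Λ.seg lam (m ⊓ Λ.d lam) (Λ.d lam) inf_le_right le_rfl) n ∧
    (∃ h, Λ.comp (Λ.seg lam 0 (m ⊓ Λ.d lam) (zero_le) inf_le_right)
                 (Λ.seg lam (m ⊓ Λ.d lam) (Λ.d lam) inf_le_right le_rfl) h = lam) ∧
    ∀ (μ ν : Λ.Mor) (h : Λ.s μ = Λ.r ν), Λ.LeSet μ m → Λ.LeSet ν n →
      Λ.comp μ ν h = lam →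
      μ = Λ.seg lam 0 (m ⊓ Λ.d lam) (zero_le) inf_le_right ∧
      ν = Λ.seg lam (m ⊓ Λ.d lam) (Λ.d lam) inf_le_right le_rfl := by
  obtain ⟨μ₀, ν₀, h₀, hdμ₀, -, hlam₀⟩ :=
    Λ.exists_eq_comp lam (add_tsub_cancel_of_le (inf_le_right : m ⊓ Λ.d lam ≤ _)).symm
  obtain ⟨hseg₁, hseg₂⟩ := Λ.seg_eq_of_eq_comp hlam₀ hdμ₀ zero_le inf_le_right
  rw [hseg₁, hseg₂]
  refine ⟨hlc.leSet_left hlam₀.symm hlam hdμ₀, Λ.leSet_right hlam₀.symm hlam hdμ₀,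
    ⟨h₀, hlam₀.symm⟩, fun μ ν h hμ _ hc => ?_⟩
  exact Λ.eq_of_comp_eq_comp (hc.trans hlam₀) ((Λ.d_eq_inf_of_leSet hc hμ).trans hdμ₀.symm)

end KGraph
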